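/- arXiv:2101.09326 — 3 statements merged into one kernel-verified Lean document; each statement's English description precedes it below -/
import Mathlib

section
/- Let X and Y be connected finite polyhedra and let f: X → D_n(Y) be an n-valued map. Then f admits a partition into irreducibles consisting of exactly k submaps f = {f_1,...,f_k} if and only if the graph Γ_f has exactly k path components; and in that case the path components of Γ_f are exactly the graphs Γ_{f_1},...,Γ_{f_k}. -/
open Function Set

/-- The ordered configuration space of `n` points in `Y`. -/
def OrdConf (n : ℕ) (Y : Type*) [TopologicalSpace Y] : Type _ :=
  {y : Fin n → Y // Function.Injective y}

instance (n : ℕ) (Y : Type*) [TopologicalSpace Y] : TopologicalSpace (OrdConf n Y) :=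
  instTopologicalSpaceSubtype

/-- Two ordered configurations are equivalent when they differ by a permutation. -/
def confSetoid (n : ℕ) (Y : Type*) [TopologicalSpace Y] : Setoid (OrdConf n Y) where
  r a b := ∃ σ : Equiv.Perm (Fin n), a.1 ∘ σ = b.1
  iseqv := by
    constructor
    · intro a; exact ⟨Equiv.refl _, rfl⟩
    · rintro a b ⟨σ, h⟩
      refine ⟨σ.symm, funext fun i => ?_⟩
      have := congrFun h (σ.symm i)
      simpa using this.symm
    · rintro a b c ⟨σ, h1⟩ ⟨τ, h2⟩
      refine ⟨τ.trans σ, funext fun i => ?_⟩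
      have h1' := congrFun h1 (τ i)
      have h2' := congrFun h2 i
      simp only [Function.comp_apply] at h1' h2' ⊢
      simp [Equiv.trans_apply, h1', h2']

/-- The unordered configuration space `D_n(Y)` of `n` points in `Y`,
with the quotient topology. -/
def UnordConf (n : ℕ) (Y : Type*) [TopologicalSpace Y] : Type _ :=
  Quotient (confSetoid n Y)

instance (n : ℕ) (Y : Type*) [TopologicalSpace Y] : TopologicalSpace (UnordConf n Y) :=
  instTopologicalSpaceQuotient

/-- The underlying `n`-element subset of `Y` determined by an unordered configuration. -/
def UnordConf.values {n : ℕ} {Y : Type*} [TopologicalSpace Y] : UnordConf n Y → Set Y :=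
  Quotient.lift (fun a => Set.range a.1) (by
    rintro a b ⟨σ, h⟩
    show Set.range a.1 = Set.range b.1
    rw [← h, Set.range_comp]
    simp)

/-- An `n`-valued map from `X` to `Y` is a continuous map `X → D_n(Y)`. -/
abbrev NValuedMap (X Y : Type*) [TopologicalSpace X] [TopologicalSpace Y] (n : ℕ) :=
  C(X, UnordConf n Y)

/-- `g` is a submap of `f` when `g(x) ⊆ f(x)` for all `x`. -/
def IsSubmap {X Y : Type*} [TopologicalSpace X] [TopologicalSpace Y] {k n : ℕ}
    (g : NValuedMap X Y k) (f : NValuedMap X Y n) : Prop :=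
  ∀ x : X, (g x).values ⊆ (f x).values

/-- An `n`-valued map is irreducible when it admits no proper (`k`-valued, `0 < k < n`) submap. -/
def IsIrreducibleNV {X Y : Type*} [TopologicalSpace X] [TopologicalSpace Y] {n : ℕ}
    (f : NValuedMap X Y n) : Prop :=
  ¬ ∃ (k : ℕ) (g : NValuedMap X Y k), 0 < k ∧ k < n ∧ IsSubmap g f

/-- A partition of an `n`-valued map `f` into `l` multimaps:
a family of `kᵢ`-valued maps with `k₁ + ⋯ + k_l = n` whose values unite to those of `f`. -/
structure NVPartition {X Y : Type*} [TopologicalSpace X] [TopologicalSpace Y] {n : ℕ}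
    (f : NValuedMap X Y n) (l : ℕ) where
  card : Fin l → ℕ
  card_pos : ∀ i, 0 < card i
  maps : ∀ i, NValuedMap X Y (card i)
  sum_card : ∑ i, card i = n
  values_eq : ∀ x : X, (f x).values = ⋃ i, UnordConf.values ((maps i) x)

/-- A partition is into irreducibles when every member is irreducible. -/
def NVPartition.IsIrreduciblePartition {X Y : Type*} [TopologicalSpace X] [TopologicalSpace Y]
    {n : ℕ} {f : NValuedMap X Y n} {l : ℕ} (P : NVPartition f l) : Prop :=
  ∀ i, IsIrreducibleNV (P.maps i)

/-- A space is a (compact) finite polyhedron when it is homeomorphic to the underlying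
space of a finite simplicial complex in some Euclidean space. -/
def IsFinitePolyhedron (X : Type*) [TopologicalSpace X] : Prop :=
  ∃ (N : ℕ) (K : Geometry.SimplicialComplex ℝ (EuclideanSpace ℝ (Fin N))),
    K.faces.Finite ∧ Nonempty (X ≃ₜ K.space)

/-- The graph of an `n`-valued map, as a subspace of `X × Y`. -/
def NVGraph {X Y : Type*} [TopologicalSpace X] [TopologicalSpace Y] {n : ℕ}
    (f : NValuedMap X Y n) : Type _ :=
  {p : X × Y // p.2 ∈ UnordConf.values (f p.1)}

instance {X Y : Type*} [TopologicalSpace X] [TopologicalSpace Y] {n : ℕ}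
    (f : NValuedMap X Y n) : TopologicalSpace (NVGraph f) :=
  instTopologicalSpaceSubtype

/-- First-coordinate projection of the graph. -/
def NVGraph.q {X Y : Type*} [TopologicalSpace X] [TopologicalSpace Y] {n : ℕ}
    {f : NValuedMap X Y n} (z : NVGraph f) : X := z.1.1

/-- Second-coordinate projection of the graph. -/
def NVGraph.F {X Y : Type*} [TopologicalSpace X] [TopologicalSpace Y] {n : ℕ}
    {f : NValuedMap X Y n} (z : NVGraph f) : Y := z.1.2

/-!
Near any `x₀`, the `n` points of `f x` stay in pairwise disjoint neighbourhoods of the points of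
`f x₀` and move continuously, so the graph `Γ_f` is a finite covering of `X`. Hence `Γ_f` is
locally path-connected, its path components are clopen, and the fibre cardinality of any clopen
subset of `Γ_f` is locally constant, hence constant on the connected `X`; a clopen subset with
`k`-point fibres is the graph of a `k`-valued submap. Conversely the graph of a submap is clopen.
So a submap is irreducible exactly when its graph has no proper nonempty clopen subset, i.e. is
a path component, and irreducible partitions correspond to the decomposition of `Γ_f` into its
(finitely many) path components. Polyhedra are Hausdorff and locally path-connected.
-/

open Topology Filter

lemma IsPreconnected.mem_iff_mem_of_isClopen {α : Type*} [TopologicalSpace α] {s t : Set α}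
    (hs : IsPreconnected s) (ht : IsClopen t) {a b : α} (ha : a ∈ s) (hb : b ∈ s) :
    a ∈ t ↔ b ∈ t :=
  ⟨fun h => hs.subset_isClopen ht ⟨a, ha, h⟩ hb,
    fun h => hs.subset_isClopen ht ⟨b, hb, h⟩ ha⟩

namespace UnordConf

variable {Y : Type*} [TopologicalSpace Y] {m : ℕ}

def mk (a : OrdConf m Y) : UnordConf m Y := Quotient.mk _ a

lemma mk_surjective : Surjective (mk : OrdConf m Y → UnordConf m Y) :=
  Quotient.mk_surjective

lemma isQuotientMap_mk : IsQuotientMap (mk : OrdConf m Y → UnordConf m Y) :=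
  isQuotientMap_quotient_mk'

@[simp] lemma values_mk (a : OrdConf m Y) : (mk a).values = range a.1 := rfl

lemma values_injective : Injective (values : UnordConf m Y → Set Y) := by
  rintro ⟨a⟩ ⟨b⟩ h
  change range a.1 = range b.1 at h
  refine Quotient.sound ⟨(Equiv.ofInjective b.1 b.2).trans
    ((Equiv.setCongr h.symm).trans (Equiv.ofInjective a.1 a.2).symm), funext fun j => ?_⟩
  simp [Equiv.apply_ofInjective_symm a.2]

lemma finite_values (c : UnordConf m Y) : c.values.Finite := by
  obtain ⟨a, rfl⟩ := mk_surjective c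
  exact finite_range _

lemma ncard_values (c : UnordConf m Y) : c.values.ncard = m := by
  obtain ⟨a, rfl⟩ := mk_surjective c
  rw [values_mk, ← Nat.card_coe_set_eq, Nat.card_range_of_injective a.2, Nat.card_fin]

lemma exists_values_eq {s : Set Y} (hs : s.Finite) (h : s.ncard = m) :
    ∃ c : UnordConf m Y, c.values = s := by
  have := hs.to_subtype
  let e : s ≃ Fin m := Finite.equivFinOfCardEq (by rw [Nat.card_coe_set_eq, h])
  refine ⟨mk ⟨fun j => e.symm j, Subtype.val_injective.comp e.symm.injective⟩, ?_⟩
  change range (Subtype.val ∘ e.symm) = s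
  rw [range_comp, e.symm.range_eq_univ, image_univ, Subtype.range_coe]

lemma _root_.OrdConf.continuous_eval (j : Fin m) : Continuous fun a : OrdConf m Y => a.1 j :=
  (continuous_apply j).comp continuous_subtype_val

lemma isOpen_setOf_values_subset {W : Set Y} (hW : IsOpen W) :
    IsOpen {c : UnordConf m Y | c.values ⊆ W} := by
  have : mk ⁻¹' {c : UnordConf m Y | c.values ⊆ W} =
      ⋂ j, (fun a : OrdConf m Y => a.1 j) ⁻¹' W := by
    ext a
    simp [range_subset_iff]
  refine isQuotientMap_mk.isOpen_preimage.1 ?_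
  rw [this]
  exact isOpen_iInter_of_finite fun j => hW.preimage (OrdConf.continuous_eval j)

lemma isOpen_setOf_values_inter_nonempty {W : Set Y} (hW : IsOpen W) :
    IsOpen {c : UnordConf m Y | (c.values ∩ W).Nonempty} := by
  have : mk ⁻¹' {c : UnordConf m Y | (c.values ∩ W).Nonempty} =
      ⋃ j, (fun a : OrdConf m Y => a.1 j) ⁻¹' W := by
    ext a
    simp [Set.Nonempty]
  refine isQuotientMap_mk.isOpen_preimage.1 ?_
  rw [this]
  exact isOpen_iUnion fun j => hW.preimage (OrdConf.continuous_eval j)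

section T2Space

variable [T2Space Y]

lemma isClosed_setOf_mem_values : IsClosed {q : UnordConf m Y × Y | q.2 ∈ q.1.values} := by
  refine isOpen_compl_iff.1 (isOpen_iff_mem_nhds.2 ?_)
  rintro ⟨c, y⟩ (hy : y ∉ c.values)
  obtain ⟨U, W, hU, hW, hyU, hcW, hUW⟩ := SeparatedNhds.of_isCompact_isCompact
    isCompact_singleton c.finite_values.isCompact (disjoint_singleton_left.2 hy)
  refine mem_of_superset (prod_mem_nhds ((isOpen_setOf_values_subset hW).mem_nhds hcW)
    (hU.mem_nhds (hyU rfl))) fun q ⟨hq, hqU⟩ hqc => hUW.ne_of_mem hqU (hq hqc) rfl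

noncomputable def sepNhds (c₀ : UnordConf m Y) : Y → Set Y :=
  c₀.finite_values.t2_separation.choose

lemma mem_sepNhds (c₀ : UnordConf m Y) (p : Y) : p ∈ c₀.sepNhds p :=
  (c₀.finite_values.t2_separation.choose_spec.1 p).1

lemma isOpen_sepNhds (c₀ : UnordConf m Y) (p : Y) : IsOpen (c₀.sepNhds p) :=
  (c₀.finite_values.t2_separation.choose_spec.1 p).2

lemma pairwiseDisjoint_sepNhds (c₀ : UnordConf m Y) : c₀.values.PairwiseDisjoint c₀.sepNhds :=
  c₀.finite_values.t2_separation.choose_spec.2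

/- A local trivialization of `D_m(Y)` around `c₀`: every `c ∈ c₀.trivNhd` has exactly one point
`c₀.branch p c` in `c₀.sepNhds p` for each `p ∈ c₀.values` (`eq_branch`), and it depends
continuously on `c` (`continuousOn_branch`). -/
def trivNhd (c₀ : UnordConf m Y) : Set (UnordConf m Y) :=
  {c | c.values ⊆ ⋃ p ∈ c₀.values, c₀.sepNhds p} ∩
    ⋂ p ∈ c₀.values, {c | (c.values ∩ c₀.sepNhds p).Nonempty}

lemma isOpen_trivNhd (c₀ : UnordConf m Y) : IsOpen c₀.trivNhd :=
  (isOpen_setOf_values_subset (isOpen_biUnion fun p _ => c₀.isOpen_sepNhds p)).inter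
    (c₀.finite_values.isOpen_biInter fun p _ =>
      isOpen_setOf_values_inter_nonempty (c₀.isOpen_sepNhds p))

lemma mem_trivNhd_self (c₀ : UnordConf m Y) : c₀ ∈ c₀.trivNhd :=
  ⟨fun p hp => mem_biUnion hp (c₀.mem_sepNhds p),
    mem_iInter₂.2 fun p hp => ⟨p, hp, c₀.mem_sepNhds p⟩⟩

-- The default value `p` is only taken outside `c₀.trivNhd`.
open Classical in
noncomputable def branch (c₀ : UnordConf m Y) (p : Y) (c : UnordConf m Y) : Y :=
  if h : (c.values ∩ c₀.sepNhds p).Nonempty then h.some else p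

variable {c₀ c : UnordConf m Y} {p : Y}

lemma branch_mem (hc : c ∈ c₀.trivNhd) (hp : p ∈ c₀.values) :
    c₀.branch p c ∈ c.values ∩ c₀.sepNhds p := by
  have h : (c.values ∩ c₀.sepNhds p).Nonempty := mem_iInter₂.1 hc.2 p hp
  rw [branch, dif_pos h]
  exact h.some_mem

lemma injOn_branch (hc : c ∈ c₀.trivNhd) : InjOn (c₀.branch · c) c₀.values := by
  intro p hp q hq (h : c₀.branch p c = c₀.branch q c)
  refine c₀.pairwiseDisjoint_sepNhds.elim hp hq
    (not_disjoint_iff.2 ⟨_, (branch_mem hc hp).2, h ▸ (branch_mem hc hq).2⟩)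

lemma image_branch (hc : c ∈ c₀.trivNhd) : (c₀.branch · c) '' c₀.values = c.values :=
  eq_of_subset_of_ncard_le (image_subset_iff.2 fun _ hp => (branch_mem hc hp).1)
    (by rw [(injOn_branch hc).ncard_image, ncard_values, ncard_values]) c.finite_values

lemma eq_branch (hc : c ∈ c₀.trivNhd) (hp : p ∈ c₀.values) {y : Y} (hy : y ∈ c.values)
    (hyp : y ∈ c₀.sepNhds p) : y = c₀.branch p c := by
  rw [← image_branch hc] at hy
  obtain ⟨q, hq, rfl⟩ := hy
  rw [c₀.pairwiseDisjoint_sepNhds.elim hq hp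
    (not_disjoint_iff.2 ⟨_, (branch_mem hc hq).2, hyp⟩)]

lemma branch_self (hp : p ∈ c₀.values) : c₀.branch p c₀ = p :=
  (eq_branch (mem_trivNhd_self c₀) hp hp (c₀.mem_sepNhds p)).symm

lemma continuousOn_branch (hp : p ∈ c₀.values) : ContinuousOn (c₀.branch p) c₀.trivNhd := by
  refine continuousOn_iff.2 fun c hc t ht hct =>
    ⟨_, isOpen_setOf_values_inter_nonempty ((c₀.isOpen_sepNhds p).inter ht),
      ⟨_, (branch_mem hc hp).1, (branch_mem hc hp).2, hct⟩, ?_⟩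
  rintro c' ⟨⟨y, hy, hyp, hyt⟩, hc'⟩
  rwa [mem_preimage, ← eq_branch hc' hp hy hyp]

end T2Space

end UnordConf

namespace NVGraph

variable {X Y : Type*} [TopologicalSpace X] [TopologicalSpace Y] {n k : ℕ} {f : NValuedMap X Y n}

lemma mem_values (z : NVGraph f) : z.F ∈ (f z.q).values := z.2

lemma continuous_q : Continuous (q : NVGraph f → X) := continuous_fst.comp continuous_subtype_val

lemma continuous_F : Continuous (F : NVGraph f → Y) := continuous_snd.comp continuous_subtype_val

def fiber (C : Set (NVGraph f)) (x : X) : Set Y :=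
  {y | ∃ h : y ∈ (f x).values, (⟨(x, y), h⟩ : NVGraph f) ∈ C}

lemma fiber_subset (C : Set (NVGraph f)) (x : X) : fiber C x ⊆ (f x).values := fun _ hy => hy.1

lemma finite_fiber (C : Set (NVGraph f)) (x : X) : (fiber C x).Finite :=
  (f x).finite_values.subset (fiber_subset C x)

lemma mem_fiber_iff {C : Set (NVGraph f)} {z : NVGraph f} : z.F ∈ fiber C z.q ↔ z ∈ C :=
  ⟨fun ⟨_, h⟩ => h, fun h => ⟨z.mem_values, h⟩⟩

lemma fiber_mono {C D : Set (NVGraph f)} (h : C ⊆ D) (x : X) : fiber C x ⊆ fiber D x :=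
  fun _ ⟨hy, hyC⟩ => ⟨hy, h hyC⟩

lemma disjoint_fiber {C D : Set (NVGraph f)} (h : Disjoint C D) (x : X) :
    Disjoint (fiber C x) (fiber D x) :=
  disjoint_left.2 fun _ ⟨_, hC⟩ ⟨_, hD⟩ => disjoint_left.1 h hC hD

lemma fiber_iUnion {ι : Type*} (C : ι → Set (NVGraph f)) (x : X) :
    fiber (⋃ i, C i) x = ⋃ i, fiber (C i) x := by
  ext y
  constructor
  · rintro ⟨h, hy⟩
    obtain ⟨i, hi⟩ := mem_iUnion.1 hy
    exact mem_iUnion.2 ⟨i, h, hi⟩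
  · intro hy
    obtain ⟨i, h, hi⟩ := mem_iUnion.1 hy
    exact ⟨h, mem_iUnion.2 ⟨i, hi⟩⟩

lemma fiber_univ (x : X) : fiber (univ : Set (NVGraph f)) x = (f x).values :=
  ext fun _ => ⟨fun ⟨h, _⟩ => h, fun h => ⟨h, mem_univ _⟩⟩

variable (f) in
def subgraph (g : NValuedMap X Y k) : Set (NVGraph f) := {z | z.F ∈ (g z.q).values}

lemma fiber_subgraph {g : NValuedMap X Y k} (hg : IsSubmap g f) (x : X) :
    fiber (subgraph f g) x = (g x).values :=
  ext fun _ => ⟨fun ⟨_, h⟩ => h, fun h => ⟨hg x h, h⟩⟩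

end NVGraph

namespace NVPartition

open NVGraph

variable {X Y : Type*} [TopologicalSpace X] [TopologicalSpace Y] {n k : ℕ}
  {f : NValuedMap X Y n} (P : NVPartition f k)

lemma isSubmap (i : Fin k) : IsSubmap (P.maps i) f := fun x =>
  (P.values_eq x).symm ▸ subset_iUnion (fun i => (P.maps i x).values) i

lemma exists_mem_subgraph (z : NVGraph f) : ∃ i, z ∈ subgraph f (P.maps i) := by
  have := z.mem_values
  rw [P.values_eq, mem_iUnion] at this
  exact this

lemma nonempty_subgraph [Nonempty X] (i : Fin k) : (subgraph f (P.maps i)).Nonempty := by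
  obtain ⟨x⟩ := ‹Nonempty X›
  obtain ⟨y, hy⟩ := nonempty_of_ncard_ne_zero (s := (P.maps i x).values)
    (by rw [UnordConf.ncard_values]; exact (P.card_pos i).ne')
  exact ⟨⟨(x, y), P.isSubmap i x hy⟩, hy⟩

lemma values_ne (x : X) {i j : Fin k} (hij : i ≠ j) :
    (P.maps i x).values ≠ (P.maps j x).values := by
  intro h
  -- dropping the `j`-th member still covers `f x`, which is too few points
  have hcover : (f x).values ⊆ ⋃ l ∈ Finset.univ.erase j, (P.maps l x).values := by
    rw [P.values_eq]
    refine iUnion_subset fun l => ?_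
    rcases eq_or_ne l j with rfl | hl
    · rw [← h]
      exact subset_biUnion_of_mem (u := fun l => (P.maps l x).values)
        (Finset.mem_erase.2 ⟨hij, Finset.mem_univ i⟩)
    · exact subset_biUnion_of_mem (u := fun l => (P.maps l x).values)
        (Finset.mem_erase.2 ⟨hl, Finset.mem_univ l⟩)
  have hle := (ncard_le_ncard hcover ((Finset.univ.erase j).finite_toSet.biUnion
    fun l _ => (P.maps l x).finite_values)).trans (Finset.set_ncard_biUnion_le _ _)
  simp only [UnordConf.ncard_values] at hle
  have := Finset.add_sum_erase Finset.univ P.card (Finset.mem_univ j)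
  have := P.card_pos j
  have := P.sum_card
  omega

lemma subgraph_injective [Nonempty X] : Injective fun i => subgraph f (P.maps i) := by
  intro i j h
  obtain ⟨x⟩ := ‹Nonempty X›
  by_contra hij
  refine P.values_ne x hij ?_
  rw [← fiber_subgraph (P.isSubmap i), ← fiber_subgraph (P.isSubmap j)]
  exact congrArg (fiber · x) h

end NVPartition

namespace NVGraph

variable {X Y : Type*} [TopologicalSpace X] [TopologicalSpace Y] [T2Space Y] {n k : ℕ}
  {f : NValuedMap X Y n} {g : NValuedMap X Y k} {C : Set (NVGraph f)} {x₀ : X} {p : Y}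

-- Over `f ⁻¹' (f x₀).trivNhd` this is the graph of the single branch through `(x₀, p)`.
def sheet (x₀ : X) (p : Y) : Set (NVGraph f) :=
  {w | f w.q ∈ (f x₀).trivNhd ∧ w.F ∈ (f x₀).sepNhds p}

lemma isOpen_sheet : IsOpen (sheet x₀ p : Set (NVGraph f)) :=
  ((f x₀).isOpen_trivNhd.preimage (f.continuous.comp continuous_q)).inter
    (((f x₀).isOpen_sepNhds p).preimage continuous_F)

lemma mem_sheet_self (z : NVGraph f) : z ∈ sheet z.q z.F :=
  ⟨UnordConf.mem_trivNhd_self _, UnordConf.mem_sepNhds _ _⟩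

noncomputable def localSection (hp : p ∈ (f x₀).values) (x : f ⁻¹' (f x₀).trivNhd) :
    NVGraph f :=
  ⟨(x, (f x₀).branch p (f x)), ((f x₀).branch_mem x.2 hp).1⟩

lemma continuous_localSection (hp : p ∈ (f x₀).values) : Continuous (localSection hp) :=
  (continuous_subtype_val.prodMk (((f x₀).continuousOn_branch hp).comp_continuous
    (f.continuous.comp continuous_subtype_val) fun x => x.2)).subtype_mk _

lemma localSection_self (hp : p ∈ (f x₀).values) :
    localSection hp ⟨x₀, UnordConf.mem_trivNhd_self _⟩ = ⟨(x₀, p), hp⟩ :=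
  Subtype.ext (Prod.ext rfl (UnordConf.branch_self hp))

lemma eq_localSection (hp : p ∈ (f x₀).values) {w : NVGraph f} (hw : w ∈ sheet x₀ p) :
    w = localSection hp ⟨w.q, hw.1⟩ :=
  Subtype.ext (Prod.ext rfl (UnordConf.eq_branch hw.1 hp w.mem_values hw.2))

instance [LocallyPathConnectedSpace X] : LocallyPathConnectedSpace (NVGraph f) := by
  refine locallyPathConnectedSpace_iff_pathComponentIn_mem_nhds.2 fun z u hu hzu => ?_
  -- paths in `X` near `z.q` lift along the local section through `z`
  let σ := localSection (f := f) (x₀ := z.q) z.mem_values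
  have hN : IsOpen (Subtype.val '' (σ ⁻¹' u)) :=
    ((f z.q).isOpen_trivNhd.preimage f.continuous).isOpenMap_subtype_val _
      (hu.preimage (continuous_localSection _))
  have hσz : σ ⟨z.q, (mem_sheet_self z).1⟩ = z := (eq_localSection _ (mem_sheet_self z)).symm
  have hzN : z.q ∈ Subtype.val '' (σ ⁻¹' u) := ⟨_, by rwa [mem_preimage, hσz], rfl⟩
  obtain ⟨W, ⟨hWo, hzW, hW⟩, hWN⟩ :=
    (isOpen_isPathConnected_basis z.q).mem_iff.1 (hN.mem_nhds hzN)
  have hWV : W ⊆ f ⁻¹' (f z.q).trivNhd := fun x hx => by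
    obtain ⟨x', -, rfl⟩ := hWN hx
    exact x'.2
  have hσW : IsPathConnected (σ '' (Subtype.val ⁻¹' W)) :=
    (hW.preimage_coe hWV).image (continuous_localSection _)
  have hσWu : σ '' (Subtype.val ⁻¹' W) ⊆ u := by
    rintro _ ⟨x, hx, rfl⟩
    obtain ⟨x', hx', hxx'⟩ := hWN hx
    rwa [← Subtype.ext hxx']
  have hmem : ∀ w ∈ sheet z.q z.F, w.q ∈ W → w ∈ σ '' (Subtype.val ⁻¹' W) :=
    fun w hw hwW => ⟨_, hwW, (eq_localSection z.mem_values hw).symm⟩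
  refine mem_of_superset ((isOpen_sheet.inter (hWo.preimage continuous_q)).mem_nhds
    ⟨mem_sheet_self z, hzW⟩) fun w ⟨hw, hwW⟩ => ?_
  exact (hσW.joinedIn z (hmem z (mem_sheet_self z) hzW) w (hmem w hw hwW)).mono hσWu

lemma fiber_eq_image_branch (hC : IsClopen C) (x₀ : X) {x : X}
    (hx : x ∈ connectedComponentIn (f ⁻¹' (f x₀).trivNhd) x₀) :
    fiber C x = ((f x₀).branch · (f x)) '' fiber C x₀ := by
  set W := connectedComponentIn (f ⁻¹' (f x₀).trivNhd) x₀
  have hWV : W ⊆ f ⁻¹' (f x₀).trivNhd := connectedComponentIn_subset _ _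
  have hx₀W : x₀ ∈ W := mem_connectedComponentIn (UnordConf.mem_trivNhd_self _)
  have hW : IsPreconnected (Subtype.val ⁻¹' W : Set (f ⁻¹' (f x₀).trivNhd)) := by
    rw [← IsInducing.subtypeVal.isPreconnected_image, Subtype.image_preimage_coe,
      inter_eq_right.2 hWV]
    exact isPreconnected_connectedComponentIn
  -- a branch over the connected set `W` stays inside or outside the clopen set `C`
  have key : ∀ p (hp : p ∈ (f x₀).values),
      localSection hp ⟨x, hWV hx⟩ ∈ C ↔ p ∈ fiber C x₀ := by
    intro p hp
    rw [(hW.image _ (continuous_localSection hp).continuousOn).mem_iff_mem_of_isClopen hC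
      (mem_image_of_mem _ hx)
      (mem_image_of_mem _ (show ⟨x₀, hWV hx₀W⟩ ∈ Subtype.val ⁻¹' W from hx₀W)),
      localSection_self]
    exact ⟨fun h => ⟨hp, h⟩, fun ⟨_, h⟩ => h⟩
  ext y
  constructor
  · rintro ⟨hy, hyC⟩
    rw [← (f x₀).image_branch (hWV hx)] at hy
    obtain ⟨p, hp, rfl⟩ := hy
    exact ⟨p, (key p hp).1 hyC, rfl⟩
  · rintro ⟨p, hp, rfl⟩
    exact ⟨_, (key p (fiber_subset C x₀ hp)).2 hp⟩

lemma connectedComponentIn_trivNhd_mem_nhds [LocallyConnectedSpace X] (x₀ : X) :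
    connectedComponentIn (f ⁻¹' (f x₀).trivNhd) x₀ ∈ 𝓝 x₀ :=
  ((f x₀).isOpen_trivNhd.preimage f.continuous).connectedComponentIn.mem_nhds
    (mem_connectedComponentIn (UnordConf.mem_trivNhd_self _))

lemma ncard_fiber_eq [LocallyConnectedSpace X] [PreconnectedSpace X] (hC : IsClopen C)
    (x x' : X) : (fiber C x).ncard = (fiber C x').ncard := by
  refine IsLocallyConstant.apply_eq_of_preconnectedSpace (f := fun x => (fiber C x).ncard)
    ((IsLocallyConstant.iff_eventually_eq _).2 fun x₀ => ?_) x x'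
  filter_upwards [connectedComponentIn_trivNhd_mem_nhds (f := f) x₀] with x hx
  have hinj := (f x₀).injOn_branch (connectedComponentIn_subset (f ⁻¹' _) _ hx)
  rw [fiber_eq_image_branch hC x₀ hx, (hinj.mono (fiber_subset C x₀)).ncard_image]

lemma nonempty_fiber [LocallyConnectedSpace X] [PreconnectedSpace X] (hC : IsClopen C)
    (hne : C.Nonempty) (x : X) : (fiber C x).Nonempty := by
  obtain ⟨z, hz⟩ := hne
  rw [← ncard_pos (finite_fiber C x), ncard_fiber_eq hC x z.q, ncard_pos (finite_fiber C z.q)]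
  exact ⟨z.F, mem_fiber_iff.2 hz⟩

lemma exists_values_eq_fiber [LocallyConnectedSpace X] (hC : IsClopen C)
    (hk : ∀ x, (fiber C x).ncard = k) :
    ∃ g : NValuedMap X Y k, ∀ x, (g x).values = fiber C x := by
  choose F hF using fun x => UnordConf.exists_values_eq (finite_fiber C x) (hk x)
  refine ⟨⟨F, continuous_iff_continuousAt.2 fun x₀ => ?_⟩, hF⟩
  set W := connectedComponentIn (f ⁻¹' (f x₀).trivNhd) x₀
  have hWV : W ⊆ f ⁻¹' (f x₀).trivNhd := connectedComponentIn_subset _ _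
  have := (finite_fiber C x₀).to_subtype
  let e : Fin k ≃ fiber C x₀ := (Finite.equivFinOfCardEq (by rw [Nat.card_coe_set_eq, hk])).symm
  have he : ∀ j, (e j : Y) ∈ (f x₀).values := fun j => fiber_subset C x₀ (e j).2
  -- over `W`, the fiber of `C` is enumerated by the branches through the points of `fiber C x₀`
  let a : W → OrdConf k Y := fun x => ⟨fun j => (f x₀).branch (e j) (f x), fun j j' h =>
    e.injective (Subtype.ext ((f x₀).injOn_branch (hWV x.2) (he j) (he j') h))⟩
  have ha : Continuous a := (continuous_pi fun j =>
    ((f x₀).continuousOn_branch (he j)).comp_continuous (f.continuous.comp continuous_subtype_val)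
      fun x => hWV x.2).subtype_mk _
  have hFa : W.domRestrict F = UnordConf.mk ∘ a := by
    funext x
    refine UnordConf.values_injective ?_
    rw [domRestrict_apply, hF, fiber_eq_image_branch hC x₀ x.2, comp_apply, UnordConf.values_mk]
    ext y
    exact ⟨fun ⟨p, hp, h⟩ => ⟨e.symm ⟨p, hp⟩, by simpa [a] using h⟩,
      fun ⟨j, h⟩ => ⟨_, (e j).2, h⟩⟩
  exact (continuousOn_iff_continuous_domRestrict.2
    (hFa ▸ UnordConf.isQuotientMap_mk.continuous.comp ha)).continuousAt
      (connectedComponentIn_trivNhd_mem_nhds x₀)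

lemma isClosed_subgraph (g : NValuedMap X Y k) : IsClosed (subgraph f g) :=
  UnordConf.isClosed_setOf_mem_values.preimage
    ((g.continuous.comp continuous_q).prodMk continuous_F)

lemma isOpen_subgraph (hg : IsSubmap g f) : IsOpen (subgraph f g) := by
  refine isOpen_iff_mem_nhds.2 fun z hz => mem_of_superset ((isOpen_sheet.inter
    ((UnordConf.isOpen_setOf_values_inter_nonempty ((f z.q).isOpen_sepNhds z.F)).preimage
      (g.continuous.comp continuous_q))).mem_nhds
    ⟨mem_sheet_self z, z.F, hz, UnordConf.mem_sepNhds _ _⟩) ?_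
  rintro w ⟨hw, y, hy, hyz⟩
  show w.F ∈ (g w.q).values
  rwa [UnordConf.eq_branch hw.1 z.mem_values w.mem_values hw.2,
    ← UnordConf.eq_branch hw.1 z.mem_values (hg _ hy) hyz]

lemma isClopen_subgraph (hg : IsSubmap g f) : IsClopen (subgraph f g) :=
  ⟨isClosed_subgraph g, isOpen_subgraph hg⟩

lemma isIrreducibleNV_of_isPreconnected [Nonempty X] (hgf : IsSubmap g f)
    (hg : IsPreconnected (subgraph f g)) : IsIrreducibleNV g := by
  rintro ⟨m, h, hm, hmk, hhg⟩
  obtain ⟨x⟩ := ‹Nonempty X›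
  have hhf : IsSubmap h f := fun x => (hhg x).trans (hgf x)
  obtain ⟨y, hy⟩ := nonempty_of_ncard_ne_zero (s := (h x).values)
    (by rw [UnordConf.ncard_values]; omega)
  have hgh := fiber_mono (hg.subset_isClopen (isClopen_subgraph hhf)
    ⟨⟨(x, y), hhf x hy⟩, hhg x hy, hy⟩) x
  rw [fiber_subgraph hgf, fiber_subgraph hhf] at hgh
  have := ncard_le_ncard hgh (h x).finite_values
  rw [UnordConf.ncard_values, UnordConf.ncard_values] at this
  omega

lemma exists_partition_of_isClopen [LocallyConnectedSpace X] [ConnectedSpace X]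
    (C : Fin k → Set (NVGraph f)) (hC : ∀ i, IsClopen (C i)) (hne : ∀ i, (C i).Nonempty)
    (hdisj : Pairwise (Disjoint on C)) (hcover : ⋃ i, C i = univ) :
    ∃ P : NVPartition f k, ∀ i, subgraph f (P.maps i) = C i := by
  obtain ⟨x₀⟩ := ‹ConnectedSpace X›.toNonempty
  choose g hg using fun i => exists_values_eq_fiber (hC i) fun x => ncard_fiber_eq (hC i) x x₀
  have hvalues : ∀ x, (f x).values = ⋃ i, fiber (C i) x := fun x => by
    rw [← fiber_iUnion, hcover, fiber_univ]
  refine ⟨⟨fun i => (fiber (C i) x₀).ncard,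
    fun i => (ncard_pos (finite_fiber _ _)).2 (nonempty_fiber (hC i) (hne i) x₀), g, ?_,
    fun x => by simp only [hg, hvalues]⟩, fun i => ?_⟩
  · rw [← finsum_eq_sum_of_fintype, ← ncard_iUnion_of_finite (fun i => finite_fiber _ _)
      (fun i j hij => disjoint_fiber (hdisj hij) x₀), ← hvalues, UnordConf.ncard_values]
  · ext z
    show z.F ∈ (g i z.q).values ↔ z ∈ C i
    rw [hg]
    exact mem_fiber_iff

end NVGraph

namespace IsIrreducibleNV

open NVGraph

variable {X Y : Type*} [TopologicalSpace X] [TopologicalSpace Y] [T2Space Y] {n k : ℕ}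
  {f : NValuedMap X Y n} {g : NValuedMap X Y k}

lemma eq_subgraph [LocallyConnectedSpace X] [PreconnectedSpace X]
    (hg : IsIrreducibleNV g) (hgf : IsSubmap g f) {C : Set (NVGraph f)} (hC : IsClopen C)
    (hne : C.Nonempty) (hCg : C ⊆ subgraph f g) : C = subgraph f g := by
  obtain ⟨z, hz⟩ := hne
  obtain ⟨h, hh⟩ := exists_values_eq_fiber hC fun x => ncard_fiber_eq hC x z.q
  have hsub : ∀ x, fiber C x ⊆ (g x).values := fun x =>
    fiber_subgraph hgf x ▸ fiber_mono hCg x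
  have hpos : 0 < (fiber C z.q).ncard :=
    (ncard_pos (finite_fiber _ _)).2 ⟨z.F, mem_fiber_iff.2 hz⟩
  have hle : k ≤ (fiber C z.q).ncard :=
    not_lt.1 fun hlt => hg ⟨_, h, hpos, hlt, fun x => (hh x).symm ▸ hsub x⟩
  have hfib : ∀ x, fiber C x = (g x).values := fun x => eq_of_subset_of_ncard_le (hsub x)
    (by rwa [UnordConf.ncard_values, ncard_fiber_eq hC x z.q]) (g x).finite_values
  exact hCg.antisymm fun w hw => mem_fiber_iff.1 (hfib w.q ▸ hw)

lemma pathComponent_eq_subgraph [LocallyPathConnectedSpace X]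
    [PreconnectedSpace X] (hg : IsIrreducibleNV g) (hgf : IsSubmap g f) {z : NVGraph f}
    (hz : z ∈ subgraph f g) : pathComponent z = subgraph f g :=
  hg.eq_subgraph hgf (IsClopen.pathComponent z) ⟨z, mem_pathComponent_self z⟩
    ((pathComponent_subset_component z).trans
      ((isClopen_subgraph hgf).connectedComponent_subset hz))

end IsIrreducibleNV

namespace NVGraph

variable {X Y : Type*} [TopologicalSpace X] [TopologicalSpace Y] [T2Space Y] {n k : ℕ}
  {f : NValuedMap X Y n} [LocallyPathConnectedSpace X] [ConnectedSpace X]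

instance : Finite (ZerothHomotopy (NVGraph f)) := by
  obtain ⟨x₀⟩ := ‹ConnectedSpace X›.toNonempty
  have := (f x₀).finite_values.to_subtype
  refine Finite.of_surjective
    (fun y : (f x₀).values => ZerothHomotopy.mk (⟨(x₀, y), y.2⟩ : NVGraph f)) fun c => ?_
  obtain ⟨w, rfl⟩ := ZerothHomotopy.mk_surjective c
  obtain ⟨y, hy, hyw⟩ :=
    nonempty_fiber (IsClopen.pathComponent w) ⟨w, mem_pathComponent_self w⟩ x₀
  rw [← ZerothHomotopy.preimage_singleton_eq_pathComponent] at hyw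
  exact ⟨⟨y, hy⟩, hyw⟩

lemma exists_isIrreduciblePartition (hk : Nat.card (ZerothHomotopy (NVGraph f)) = k) :
    ∃ P : NVPartition f k, P.IsIrreduciblePartition := by
  let e := Finite.equivFinOfCardEq hk
  let C : Fin k → Set (NVGraph f) := fun i => ZerothHomotopy.mk ⁻¹' {e.symm i}
  obtain ⟨P, hP⟩ := exists_partition_of_isClopen C
    (fun i => (isClopen_discrete _).preimage ZerothHomotopy.isQuotientMap_mk.continuous)
    (fun i => (singleton_nonempty _).preimage ZerothHomotopy.mk_surjective)
    (fun i j hij => (disjoint_singleton.2 (e.symm.injective.ne hij)).preimage _)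
    (by simp only [C, ← preimage_iUnion, iUnion_singleton_eq_range, e.symm.range_eq_univ,
      preimage_univ])
  refine ⟨P, fun i => isIrreducibleNV_of_isPreconnected (P.isSubmap i) ?_⟩
  obtain ⟨z, hz⟩ := ZerothHomotopy.mk_surjective (e.symm i)
  simp only [hP, C, ← hz, ZerothHomotopy.preimage_singleton_eq_pathComponent]
  exact isPathConnected_pathComponent.isConnected.isPreconnected

end NVGraph

namespace NVPartition.IsIrreduciblePartition

open NVGraph

variable {X Y : Type*} [TopologicalSpace X] [TopologicalSpace Y] [T2Space Y] {n k : ℕ}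
  {f : NValuedMap X Y n} [LocallyPathConnectedSpace X] [ConnectedSpace X] {P : NVPartition f k}

lemma setOf_pathComponent_eq (hP : P.IsIrreduciblePartition) :
    {S : Set (NVGraph f) | ∃ z, S = pathComponent z} =
      {S | ∃ i, S = subgraph f (P.maps i)} := by
  ext S
  constructor
  · rintro ⟨z, rfl⟩
    obtain ⟨i, hi⟩ := P.exists_mem_subgraph z
    exact ⟨i, (hP i).pathComponent_eq_subgraph (P.isSubmap i) hi⟩
  · rintro ⟨i, rfl⟩
    obtain ⟨z, hz⟩ := P.nonempty_subgraph i
    exact ⟨z, ((hP i).pathComponent_eq_subgraph (P.isSubmap i) hz).symm⟩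

lemma nat_card_zerothHomotopy (hP : P.IsIrreduciblePartition) :
    Nat.card (ZerothHomotopy (NVGraph f)) = k := by
  choose z hz using P.nonempty_subgraph
  have hpre : ∀ i, ZerothHomotopy.mk ⁻¹' {ZerothHomotopy.mk (z i)} = subgraph f (P.maps i) :=
    fun i => (ZerothHomotopy.preimage_singleton_eq_pathComponent _).trans
      ((hP i).pathComponent_eq_subgraph (P.isSubmap i) (hz i))
  refine (Nat.card_eq_of_bijective (fun i => ZerothHomotopy.mk (z i))
    ⟨fun i j h => P.subgraph_injective ?_, fun c => ?_⟩).symm.trans (Nat.card_fin k)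
  · simp only [← hpre, h]
  · obtain ⟨w, rfl⟩ := ZerothHomotopy.mk_surjective c
    obtain ⟨i, hi⟩ := P.exists_mem_subgraph w
    rw [← hpre i] at hi
    exact ⟨i, hi.symm⟩

end NVPartition.IsIrreduciblePartition

lemma locallyPathConnectedSpace_biUnion_of_convex {E ι : Type*} [NormedAddCommGroup E]
    [NormedSpace ℝ E] {t : Set ι} (ht : t.Finite) {c : ι → Set E}
    (hconv : ∀ i ∈ t, Convex ℝ (c i)) (hcl : ∀ i ∈ t, IsClosed (c i)) :
    LocallyPathConnectedSpace (⋃ i ∈ t, c i) := by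
  -- near `x`, the union only meets pieces through `x`, so small balls in it are star-shaped
  have hδ : ∀ x : ⋃ i ∈ t, c i,
      ∃ δ > 0, ∀ y ∈ Metric.ball x.1 δ, ∀ i ∈ t, y ∈ c i → x.1 ∈ c i :=
    fun x => Metric.eventually_nhds_iff_ball.1 ((eventually_all_finite ht).2 fun i hi => by
      by_cases hx : x.1 ∈ c i
      · exact Eventually.of_forall fun _ _ => hx
      · exact mem_of_superset ((hcl i hi).isOpen_compl.mem_nhds hx) fun _ hy hyc => absurd hyc hy)
  choose δ hδpos hδ using hδ
  refine LocallyPathConnectedSpace.of_bases (p := fun x ε => 0 < ε ∧ ε ≤ δ x)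
    (s := fun x ε => Subtype.val ⁻¹' Metric.ball x.1 ε) (fun x => ?_)
    fun x ε ⟨hε, hεδ⟩ => ?_
  · rw [nhds_subtype]
    exact (Metric.nhds_basis_ball.restrict fun ε hε => ⟨min ε (δ x), lt_min hε (hδpos x),
      min_le_right _ _, Metric.ball_subset_ball (min_le_left _ _)⟩).comap _
  rw [IsInducing.subtypeVal.isPathConnected_iff, Subtype.image_preimage_coe]
  refine StarConvex.isPathConnected (fun y ⟨hy, hyε⟩ a b ha hb hab => ⟨?_,
    (convex_ball x.1 ε).starConvex (Metric.mem_ball_self hε) hyε ha hb hab⟩)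
    ⟨x.2, Metric.mem_ball_self hε⟩
  obtain ⟨i, hi, hyi⟩ := mem_iUnion₂.1 hy
  exact mem_iUnion₂.2 ⟨i, hi, (hconv i hi).starConvex
    (hδ x y (Metric.ball_subset_ball hεδ hyε) i hi hyi) hyi ha hb hab⟩

lemma IsFinitePolyhedron.t2Space {Z : Type*} [TopologicalSpace Z] (hZ : IsFinitePolyhedron Z) :
    T2Space Z := by
  obtain ⟨N, K, -, ⟨e⟩⟩ := hZ
  exact e.isEmbedding.t2Space

lemma IsFinitePolyhedron.locallyPathConnectedSpace {Z : Type*} [TopologicalSpace Z]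
    (hZ : IsFinitePolyhedron Z) : LocallyPathConnectedSpace Z := by
  obtain ⟨N, K, hfin, ⟨e⟩⟩ := hZ
  have : LocallyPathConnectedSpace K.space := locallyPathConnectedSpace_biUnion_of_convex hfin
    (fun s _ => convex_convexHull ℝ _)
    fun s _ => (s.finite_toSet.isCompact_convexHull (𝕜 := ℝ)).isClosed
  exact e.isOpenEmbedding.locallyPathConnectedSpace

theorem statement_0_general {X Y : Type*} [TopologicalSpace X] [TopologicalSpace Y]
    [ConnectedSpace X]
    (hX : IsFinitePolyhedron X) (hY : IsFinitePolyhedron Y)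
    {n : ℕ} (f : NValuedMap X Y n) (k : ℕ) :
    ((∃ P : NVPartition f k, P.IsIrreduciblePartition) ↔
      Nat.card (ZerothHomotopy (NVGraph f)) = k) ∧
    ∀ P : NVPartition f k, P.IsIrreduciblePartition →
      {S : Set (NVGraph f) | ∃ z, S = pathComponent z} =
        {S : Set (NVGraph f) |
          ∃ i : Fin k, S = {z | NVGraph.F z ∈ UnordConf.values (P.maps i (NVGraph.q z))}} := by
  have := hY.t2Space
  have := hX.locallyPathConnectedSpace
  exact ⟨⟨fun ⟨_, hP⟩ => hP.nat_card_zerothHomotopy,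
    NVGraph.exists_isIrreduciblePartition⟩, fun _ hP => hP.setOf_pathComponent_eq⟩

theorem statement_0 {X Y : Type*} [TopologicalSpace X] [TopologicalSpace Y]
    [ConnectedSpace X] [ConnectedSpace Y]
    (hX : IsFinitePolyhedron X) (hY : IsFinitePolyhedron Y)
    {n : ℕ} (f : NValuedMap X Y n) (k : ℕ) :
    ((∃ P : NVPartition f k, P.IsIrreduciblePartition) ↔
      Nat.card (ZerothHomotopy (NVGraph f)) = k) ∧
    ∀ P : NVPartition f k, P.IsIrreduciblePartition →
      {S : Set (NVGraph f) | ∃ z, S = pathComponent z} =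
        {S : Set (NVGraph f) |
          ∃ i : Fin k, S = {z | NVGraph.F z ∈ UnordConf.values (P.maps i (NVGraph.q z))}} :=
  statement_0_general hX hY f k
end

section
/- In the basic-lift setup, suppose i, j ∈ {1,...,n} lie in different σ-classes (i.e., there is no γ ∈ π with σ_γ(j) = i). Then for all α, β ∈ π, the sets p(Fix(α ∘ f̄_i)) and p(Fix(β ∘ f̄_j)) are disjoint, where Fix(h) = {x̃ ∈ X̃ : h(x̃) = x̃}. Consequently, if f = {g, h} is a partition of f into two submaps, every fixed point class of g is disjoint from every fixed point class of h. -/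
open Function Set

/-- The universal-covering setup: `p : X̃ → X` is a universal covering with deck
transformation group `π` acting freely and transitively on fibers. -/
structure DeckSetup (π : Type*) [Group π] (Xt X : Type*) [TopologicalSpace Xt]
    [TopologicalSpace X] [MulAction π Xt] (p : Xt → X) : Prop where
  continuous_p : Continuous p
  covering : IsCoveringMap p
  simplyConnected : SimplyConnectedSpace Xt
  continuous_smul : ∀ γ : π, Continuous fun x : Xt => γ • x
  p_smul : ∀ (γ : π) (x : Xt), p (γ • x) = p x
  exists_deck : ∀ x y : Xt, p x = p y → ∃ γ : π, γ • x = y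
  free : ∀ (γ : π) (x : Xt), γ • x = x → γ = 1

/-- A lift `f̄ = (f̄_1,…,f̄_n) : X̃ → F_n(X̃,π)` of an `n`-valued selfmap `f` of `X`,
together with its associated data `φ_1,…,φ_n : π → π` and homomorphism
`σ : π → Σ_n` satisfying `f̄_i(α·x̃) = φ_i(α)·f̄_{σ_α⁻¹(i)}(x̃)`. -/
structure NVLift {π Xt X : Type*} [Group π] [TopologicalSpace Xt] [TopologicalSpace X]
    [MulAction π Xt] (p : Xt → X) {n : ℕ} (f : NValuedMap X X n) where
  fbar : Fin n → Xt → Xt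
  continuous_fbar : ∀ i, Continuous (fbar i)
  inj : ∀ x : Xt, Function.Injective fun i => p (fbar i x)
  lifts : ∀ x : Xt, UnordConf.values (f (p x)) = Set.range fun i => p (fbar i x)
  phi : Fin n → π → π
  sigma : π →* Equiv.Perm (Fin n)
  equivar : ∀ (α : π) (x : Xt) (i : Fin n),
    fbar i (α • x) = phi i α • fbar ((sigma α)⁻¹ i) x

/-- `S` is a σ-class: an equivalence class of the relation `i ∼ j ↔ ∃ γ, σ_γ(j) = i`. -/
def IsSigmaClass {π : Type*} [Group π] {n : ℕ} (σ : π →* Equiv.Perm (Fin n))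
    (S : Set (Fin n)) : Prop :=
  ∃ j : Fin n, S = {i | ∃ γ : π, σ γ j = i}

/-!
If `x̃ ∈ Fix(α ∘ f̄_i)` and `ỹ ∈ Fix(β ∘ f̄_j)` lie over the same point, then `ỹ = γ·x̃` for a
deck transformation `γ`, and equivariance of the lift gives
`p f̄_j(ỹ) = p f̄_{σ_γ⁻¹(j)}(x̃)`. Both sides equal `p x̃`, which is also `p f̄_i(x̃)`, so
injectivity of `i ↦ p f̄_i(x̃)` forces `σ_γ⁻¹(j) = i`. For a partition `f = {g, h}` the values of
`g` and `h` at each point are disjoint by counting, while `σ_γ(j) = i` with `i` indexing `g` and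
`j` indexing `h` would make `p f̄_i(γ·x̃) = p f̄_j(x̃)` a common value.
-/

theorem Set.disjoint_range_of_union_eq_range {α : Type*} {k m n : ℕ} {u : Fin k → α}
    {v : Fin m → α} {w : Fin n → α} (hw : Injective w) (hkm : k + m = n)
    (h : range u ∪ range v = range w) : Disjoint (range u) (range v) := by
  have hu : (range u).ncard ≤ k := by
    simpa [Nat.card_coe_set_eq] using Finite.card_range_le u
  have hv : (range v).ncard ≤ m := by
    simpa [Nat.card_coe_set_eq] using Finite.card_range_le v
  have huv : (range u ∪ range v).ncard = n := by
    simp [h, ncard_range_of_injective hw]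
  rw [← ncard_union_eq_iff]
  exact le_antisymm (ncard_union_le _ _) (by omega)

namespace NVLift

variable {π Xt X : Type*} [Group π] [TopologicalSpace Xt] [TopologicalSpace X] [MulAction π Xt]
  {p : Xt → X} {n : ℕ} {f : NValuedMap X X n} (L : NVLift (π := π) p f)

def fixedPointClass (α : π) (i : Fin n) : Set X :=
  p '' {x : Xt | α • L.fbar i x = x}

theorem p_fbar_smul (hp : DeckSetup π Xt X p) (γ : π) (x : Xt) (i : Fin n) :
    p (L.fbar i (γ • x)) = p (L.fbar ((L.sigma γ)⁻¹ i) x) := by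
  rw [L.equivar, hp.p_smul]

theorem p_fbar_of_smul_eq (hp : DeckSetup π Xt X p) {α : π} {i : Fin n} {x : Xt}
    (hx : α • L.fbar i x = x) : p (L.fbar i x) = p x := by
  conv_rhs => rw [← hx, hp.p_smul]

theorem exists_sigma_eq_of_p_eq (hp : DeckSetup π Xt X p) {α β : π} {i j : Fin n} {x y : Xt}
    (hx : α • L.fbar i x = x) (hy : β • L.fbar j y = y) (hxy : p x = p y) :
    ∃ γ : π, L.sigma γ j = i := by
  obtain ⟨γ, rfl⟩ := hp.exists_deck x y hxy
  have hval : p (L.fbar ((L.sigma γ)⁻¹ j) x) = p (L.fbar i x) := by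
    rw [← L.p_fbar_smul hp, L.p_fbar_of_smul_eq hp hy, L.p_fbar_of_smul_eq hp hx, hxy]
  exact ⟨γ⁻¹, by rw [map_inv]; exact L.inj x hval⟩

theorem disjoint_fixedPointClass (hp : DeckSetup π Xt X p) {i j : Fin n}
    (hij : ¬ ∃ γ : π, L.sigma γ j = i) (α β : π) :
    Disjoint (L.fixedPointClass α i) (L.fixedPointClass β j) := by
  rw [disjoint_left]
  rintro _ ⟨x, hx, rfl⟩ ⟨y, hy, hxy⟩
  exact hij (L.exists_sigma_eq_of_p_eq hp hx hy hxy.symm)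

section Partition

variable {k m : ℕ} {g : NValuedMap X X k} {h : NValuedMap X X m}
  {indg : Fin k → Fin n} {indh : Fin m → Fin n}

theorem sigma_ne_of_partition (hp : DeckSetup π Xt X p) (hkm : k + m = n)
    (hg : ∀ x : Xt, (g (p x)).values = range fun a => p (L.fbar (indg a) x))
    (hh : ∀ x : Xt, (h (p x)).values = range fun b => p (L.fbar (indh b) x))
    (hf : ∀ x : X, (f x).values = (g x).values ∪ (h x).values)
    (x : Xt) (γ : π) (a : Fin k) (b : Fin m) : L.sigma γ (indh b) ≠ indg a := by
  intro hγ
  have hdisj : Disjoint (g (p x)).values (h (p x)).values := by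
    rw [hg x, hh x]
    exact Set.disjoint_range_of_union_eq_range (L.inj x) hkm
      (by rw [← hg x, ← hh x, ← hf, L.lifts])
  have hmem_g : p (L.fbar (indg a) (γ • x)) ∈ (g (p x)).values := by
    rw [← hp.p_smul γ x, hg]
    exact ⟨a, rfl⟩
  have hmem_h : p (L.fbar (indg a) (γ • x)) ∈ (h (p x)).values := by
    rw [L.p_fbar_smul hp, Equiv.Perm.inv_eq_iff_eq.mpr hγ.symm, hh]
    exact ⟨b, rfl⟩
  exact disjoint_left.mp hdisj hmem_g hmem_h

theorem disjoint_fixedPointClass_of_partition (hp : DeckSetup π Xt X p) (hkm : k + m = n)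
    (hg : ∀ x : Xt, (g (p x)).values = range fun a => p (L.fbar (indg a) x))
    (hh : ∀ x : Xt, (h (p x)).values = range fun b => p (L.fbar (indh b) x))
    (hf : ∀ x : X, (f x).values = (g x).values ∪ (h x).values)
    (α β : π) (a : Fin k) (b : Fin m) :
    Disjoint (L.fixedPointClass α (indg a)) (L.fixedPointClass β (indh b)) := by
  rw [disjoint_left]
  rintro _ ⟨x, hx, rfl⟩ ⟨y, hy, hxy⟩
  obtain ⟨γ, hγ⟩ := L.exists_sigma_eq_of_p_eq hp hx hy hxy.symm
  exact L.sigma_ne_of_partition hp hkm hg hh hf x γ a b hγ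

end Partition

end NVLift

theorem statement_8_general {π Xt X : Type*} [Group π] [TopologicalSpace Xt] [TopologicalSpace X]
    [MulAction π Xt]
    {p : Xt → X} (hp : DeckSetup π Xt X p)
    {n : ℕ} {f : NValuedMap X X n} (L : NVLift (π := π) p f) :
    (∀ i j : Fin n, (¬ ∃ γ : π, L.sigma γ j = i) →
      ∀ α β : π,
        Disjoint (p '' {x : Xt | α • L.fbar i x = x}) (p '' {x : Xt | β • L.fbar j x = x})) ∧
    (∀ (k m : ℕ), k + m = n →
      ∀ (g : NValuedMap X X k) (h : NValuedMap X X m)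
        (indg : Fin k → Fin n) (indh : Fin m → Fin n),
        (∀ x : Xt, UnordConf.values (g (p x)) = Set.range fun a => p (L.fbar (indg a) x)) →
        (∀ x : Xt, UnordConf.values (h (p x)) = Set.range fun b => p (L.fbar (indh b) x)) →
        (∀ x : X, UnordConf.values (f x) = UnordConf.values (g x) ∪ UnordConf.values (h x)) →
        ∀ (α β : π) (a : Fin k) (b : Fin m),
          Disjoint (p '' {x : Xt | α • L.fbar (indg a) x = x})
            (p '' {x : Xt | β • L.fbar (indh b) x = x})) :=
  ⟨fun _ _ hij α β => L.disjoint_fixedPointClass hp hij α β,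
    fun _ _ hkm _ _ _ _ hg hh hf α β a b =>
      L.disjoint_fixedPointClass_of_partition hp hkm hg hh hf α β a b⟩

theorem statement_8 {π Xt X : Type*} [Group π] [TopologicalSpace Xt] [TopologicalSpace X]
    [MulAction π Xt] [ConnectedSpace X] (hX : IsFinitePolyhedron X)
    {p : Xt → X} (hp : DeckSetup π Xt X p)
    {n : ℕ} {f : NValuedMap X X n} (L : NVLift (π := π) p f) :
    (∀ i j : Fin n, (¬ ∃ γ : π, L.sigma γ j = i) →
      ∀ α β : π,
        Disjoint (p '' {x : Xt | α • L.fbar i x = x}) (p '' {x : Xt | β • L.fbar j x = x})) ∧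
    (∀ (k m : ℕ), k + m = n →
      ∀ (g : NValuedMap X X k) (h : NValuedMap X X m)
        (indg : Fin k → Fin n) (indh : Fin m → Fin n),
        (∀ x : Xt, UnordConf.values (g (p x)) = Set.range fun a => p (L.fbar (indg a) x)) →
        (∀ x : Xt, UnordConf.values (h (p x)) = Set.range fun b => p (L.fbar (indh b) x)) →
        (∀ x : X, UnordConf.values (f x) = UnordConf.values (g x) ∪ UnordConf.values (h x)) →
        ∀ (α β : π) (a : Fin k) (b : Fin m),
          Disjoint (p '' {x : Xt | α • L.fbar (indg a) x = x})
            (p '' {x : Xt | β • L.fbar (indh b) x = x})) :=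
  statement_8_general hp L
end

section
/- Let A be a q×q integer matrix all of whose rows are congruent mod n to a fixed vector (l_1,...,l_q). Then the linear n-valued map f_{n,A}: T^q → D_n(T^q) splits (i.e., admits a partition into n single-valued continuous maps) if and only if n divides every l_j, and in that case f_{n,A} splits into n single-valued maps, each homotopic to the single-valued linear map f_{1,(1/n)A} induced by the integer matrix (1/n)A. -/
open Function Set

/-- The `q`-torus `ℝ^q/ℤ^q`. -/
abbrev Torus (q : ℕ) := Fin q → AddCircle (1 : ℝ)

/-- The universal covering projection `ℝ^q → T^q`, `t ↦ t mod 1`. -/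
noncomputable def torusProj {q : ℕ} (t : Fin q → ℝ) : Torus q := fun i => (t i : AddCircle (1 : ℝ))

/-- The affine lift `f^k_{n,A}(t) = (1/n)(At + k·c)`, where `c = (1,…,1)`. -/
noncomputable def linLift {q : ℕ} (n : ℕ) (A : Matrix (Fin q) (Fin q) ℤ) (k : ℤ) (t : Fin q → ℝ) :
    Fin q → ℝ :=
  fun i => (1 / (n : ℝ)) * ((A.map (Int.cast : ℤ → ℝ)).mulVec t i + (k : ℝ))

/-- `f` is (a representative of) the linear `n`-valued torus map `f_{n,A}` induced by `A`:
its value at `p^q(t)` is `{p^q(f^1_{n,A}(t)), …, p^q(f^n_{n,A}(t))}`. -/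
def IsLinearNV {q : ℕ} (n : ℕ) (A : Matrix (Fin q) (Fin q) ℤ)
    (f : NValuedMap (Torus q) (Torus q) n) : Prop :=
  ∀ t : Fin q → ℝ,
    UnordConf.values (f (torusProj t)) =
      Set.range fun k : Fin n => torusProj (linLift n A ((k : ℕ) + 1) t)

/-- `f` has a proper partition: a partition into at least two multimaps. -/
def HasProperPartition {X Y : Type*} [TopologicalSpace X] [TopologicalSpace Y] {n : ℕ}
    (f : NValuedMap X Y n) : Prop :=
  ∃ l : ℕ, 2 ≤ l ∧ Nonempty (NVPartition f l)

/-
The lift `f^k_{n,A}(t) = (At + kc)/n` moves by `A e_j / n` as `t` runs along the loop `s ↦ s e_j`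
of `T^q`. A continuous selection `g` of `f_{n,A}` differs from this lift by one of the finitely
many constants `k/n`, hence by the same constant all along the loop (ℝ is connected); closing the
loop forces `A_jj / n ∈ ℤ`, and so `n ∣ l_j` as `A_jj ≡ l_j`. Conversely, if `n` divides `A = nB`,
the lifts are `Bt + kc/n`, so the selections `x ↦ Bx + p(kc/n)` split `f_{n,A}`, and each is
homotopic to `Bx` by sliding the translation back to `0`.
-/

@[fun_prop]
theorem continuous_torusProj {q : ℕ} : Continuous (torusProj (q := q)) :=
  continuous_pi fun i => (AddCircle.continuous_mk' 1).comp (continuous_apply i)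

theorem torusProj_surjective {q : ℕ} : Surjective (torusProj (q := q)) := fun x => by
  choose t ht using fun i => QuotientAddGroup.mk_surjective (x i)
  exact ⟨t, funext ht⟩

theorem torusProj_add {q : ℕ} (t u : Fin q → ℝ) :
    torusProj (t + u) = torusProj t + torusProj u :=
  rfl

theorem torusProj_single {q : ℕ} (j : Fin q) (s : ℝ) :
    torusProj (Pi.single j s) = Pi.single j (s : AddCircle (1 : ℝ)) := by
  ext m
  by_cases h : m = j <;> simp [torusProj, h]

theorem torusProj_intCast {q : ℕ} (k : ℤ) : torusProj (fun _ : Fin q => (k : ℝ)) = 0 :=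
  funext fun _ => (AddCircle.coe_eq_zero_iff 1).2 ⟨k, by simp⟩

/-- The linear map `f_{1,B}`, defined on `T^q` directly rather than through a lift. -/
def torusLin {q : ℕ} (B : Matrix (Fin q) (Fin q) ℤ) : C(Torus q, Torus q) where
  toFun x i := ∑ m, B i m • x m
  continuous_toFun := by fun_prop

theorem torusLin_torusProj {q : ℕ} (B : Matrix (Fin q) (Fin q) ℤ) (t : Fin q → ℝ) :
    torusLin B (torusProj t) = torusProj ((B.map (Int.cast : ℤ → ℝ)).mulVec t) := by
  funext i
  simp [torusLin, torusProj, Matrix.mulVec, dotProduct]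

theorem linLift_apply {q : ℕ} (n : ℕ) (A : Matrix (Fin q) (Fin q) ℤ) (k : ℤ) (t : Fin q → ℝ)
    (i : Fin q) : linLift n A k t i = ((A.map (Int.cast : ℤ → ℝ)).mulVec t i + k) / n := by
  rw [linLift, one_div_mul_eq_div]

theorem linLift_natCast_smul {q n : ℕ} (hn : n ≠ 0) (B : Matrix (Fin q) (Fin q) ℤ) (k : ℤ)
    (t : Fin q → ℝ) :
    linLift n ((n : ℤ) • B) k t = (B.map (Int.cast : ℤ → ℝ)).mulVec t + fun _ => (k / n : ℝ) := by
  funext i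
  have : ((n : ℤ) • B).map (Int.cast : ℤ → ℝ) = (n : ℝ) • B.map Int.cast := by
    ext
    simp only [Matrix.map_apply, Matrix.smul_apply, smul_eq_mul, Int.cast_mul, Int.cast_natCast]
  rw [linLift_apply, this, Matrix.smul_mulVec, Pi.add_apply, Pi.smul_apply, smul_eq_mul]
  field_simp

theorem torusProj_linLift_natCast_smul {q n : ℕ} (hn : n ≠ 0) (B : Matrix (Fin q) (Fin q) ℤ)
    (k : ℤ) (t : Fin q → ℝ) :
    torusProj (linLift n ((n : ℤ) • B) k t) =
      torusProj (fun _ => (k / n : ℝ)) + torusLin B (torusProj t) := by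
  rw [linLift_natCast_smul hn, torusProj_add, torusLin_torusProj, add_comm]

theorem torusProj_linLift_one {q : ℕ} (B : Matrix (Fin q) (Fin q) ℤ) (t : Fin q → ℝ) :
    torusProj (linLift 1 B 1 t) = torusLin B (torusProj t) := by
  have h := torusProj_linLift_natCast_smul one_ne_zero B 1 t
  simpa only [Nat.cast_one, one_smul, div_one, torusProj_intCast, zero_add] using h

theorem AddCircle.coe_eq_zero_of_loop_sub_mem_finite {γ : ℝ → AddCircle (1 : ℝ)}
    (hγ : Continuous γ) (hloop : γ 1 = γ 0) {a : ℝ} {S : Set (AddCircle (1 : ℝ))}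
    (hS : S.Finite) (hmem : ∀ s : ℝ, γ s - ↑(s * a) ∈ S) : (a : AddCircle (1 : ℝ)) = 0 := by
  have hconst : γ 1 - ↑(1 * a) = γ 0 - ↑(0 * a) :=
    isPreconnected_univ.constant_of_mapsTo hS.isDiscrete
      (by fun_prop : Continuous fun s : ℝ => γ s - ↑(s * a)).continuousOn
      (fun s _ => hmem s) (mem_univ 1) (mem_univ 0)
  rwa [hloop, one_mul, zero_mul, AddCircle.coe_zero, sub_zero, sub_eq_self] at hconst

theorem dvd_diag_of_continuous_selection {q n : ℕ} (hn : n ≠ 0) (A : Matrix (Fin q) (Fin q) ℤ)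
    (g : C(Torus q, Torus q))
    (hg : ∀ t, g (torusProj t) ∈ range fun k : Fin n => torusProj (linLift n A ((k : ℕ) + 1) t))
    (j : Fin q) : (n : ℤ) ∣ A j j := by
  set γ : ℝ → AddCircle (1 : ℝ) := fun s => g (torusProj (Pi.single j s)) j
  have hγ : Continuous γ := (continuous_apply j).comp <|
    g.continuous.comp (continuous_torusProj.comp (continuous_single (A := fun _ : Fin q => ℝ) j))
  have hloop : γ 1 = γ 0 := by
    simp only [γ, torusProj_single, AddCircle.coe_period, Pi.single_zero, AddCircle.coe_zero]
  have hmem : ∀ s : ℝ, γ s - ↑(s * (A j j / n)) ∈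
      range fun k : Fin n => ((((k : ℕ) + 1) / n : ℝ) : AddCircle (1 : ℝ)) := fun s => by
    obtain ⟨k, hk⟩ := hg (Pi.single j s)
    refine ⟨k, ?_⟩
    simp only [γ, ← hk, torusProj, linLift_apply, ← AddCircle.coe_sub, Matrix.mulVec_single,
      Pi.smul_apply, Matrix.col_apply, Matrix.map_apply, op_smul_eq_mul]
    congr 1
    push_cast
    field_simp
    ring
  obtain ⟨z, hz⟩ := (AddCircle.coe_eq_zero_iff 1).1 <|
    AddCircle.coe_eq_zero_of_loop_sub_mem_finite hγ hloop (finite_range _) hmem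
  refine ⟨z, ?_⟩
  rw [zsmul_one, eq_div_iff (Nat.cast_ne_zero.2 hn)] at hz
  exact_mod_cast hz.symm.trans (mul_comm _ _)

theorem ContinuousMap.homotopic_const_add {X G : Type*} [TopologicalSpace X] [TopologicalSpace G]
    [AddZeroClass G] [ContinuousAdd G] [PathConnectedSpace G] (a : G) (h : C(X, G)) :
    (ContinuousMap.const X a + h).Homotopic h := by
  let γ : Path a 0 := (PathConnectedSpace.joined a 0).somePath
  exact ⟨{ toFun := fun p => γ p.1 + h p.2
           map_zero_left := fun x => by simp
           map_one_left := fun x => by simp }⟩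

theorem IsLinearNV.exists_split_homotopic_torusLin {q n : ℕ} (hn : n ≠ 0)
    {B : Matrix (Fin q) (Fin q) ℤ} {f : NValuedMap (Torus q) (Torus q) n}
    (hf : IsLinearNV n ((n : ℤ) • B) f) :
    ∃ g : Fin n → C(Torus q, Torus q),
      (∀ x, UnordConf.values (f x) = range fun i => g i x) ∧ ∀ i, (g i).Homotopic (torusLin B) := by
  let g : Fin n → C(Torus q, Torus q) := fun k =>
    ContinuousMap.const _ (torusProj fun _ => (((k : ℕ) + 1 : ℤ) / n : ℝ)) + torusLin B
  have hg : ∀ k t, g k (torusProj t) = torusProj (linLift n ((n : ℤ) • B) ((k : ℕ) + 1) t) :=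
    fun k t => (torusProj_linLift_natCast_smul hn B _ t).symm
  refine ⟨g, fun x => ?_, fun i => ContinuousMap.homotopic_const_add _ _⟩
  obtain ⟨t, rfl⟩ := torusProj_surjective x
  simp only [hf t, hg]

theorem statement_11 {q n : ℕ} (hn : 0 < n) (A : Matrix (Fin q) (Fin q) ℤ) (l : Fin q → ℤ)
    (hrow : ∀ i j, A i j ≡ l j [ZMOD (n : ℤ)])
    (f : NValuedMap (Torus q) (Torus q) n) (hf : IsLinearNV n A f) :
    ((∃ g : Fin n → C(Torus q, Torus q),
        ∀ x : Torus q, UnordConf.values (f x) = Set.range fun i => g i x) ↔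
      ∀ j, (n : ℤ) ∣ l j) ∧
    ((∀ j, (n : ℤ) ∣ l j) →
      ∃ g : Fin n → C(Torus q, Torus q),
        (∀ x : Torus q, UnordConf.values (f x) = Set.range fun i => g i x) ∧
        ∀ (i : Fin n) (φ : C(Torus q, Torus q)),
          (∀ t : Fin q → ℝ,
            φ (torusProj t) =
              torusProj (linLift 1 (Matrix.of fun a b => A a b / (n : ℤ)) 1 t)) →
          (g i).Homotopic φ) := by
  refine (fun split_of_dvd => ⟨⟨?_, fun hl => (split_of_dvd hl).imp fun g hg => hg.1⟩,
    split_of_dvd⟩) ?_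
  · intro hl
    set B : Matrix (Fin q) (Fin q) ℤ := Matrix.of fun a b => A a b / (n : ℤ)
    have hA : A = (n : ℤ) • B := by
      ext a b
      exact (Int.mul_ediv_cancel' ((hrow a b).dvd_iff.2 (hl b))).symm
    obtain ⟨g, hsplit, hhom⟩ := (hA ▸ hf).exists_split_homotopic_torusLin hn.ne'
    refine ⟨g, hsplit, fun i φ hφ => ?_⟩
    have hφB : φ = torusLin B := by
      ext1 x
      obtain ⟨t, rfl⟩ := torusProj_surjective x
      rw [hφ t, torusProj_linLift_one]
    exact hφB ▸ hhom i
  · rintro ⟨g, hg⟩ j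
    refine (hrow j j).dvd_iff.1 <|
      dvd_diag_of_continuous_selection hn.ne' A (g ⟨0, hn⟩) (fun t => ?_) j
    rw [← hf t, hg]
    exact mem_range_self _
end
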